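/- With κ₁ = 0 and κ₂ > 0, the antiphase bifurcation amplitude r_anti, defined as the root near r_m of σ r²(r² − r_m²) = 2κ₂ (i.e., det(J_anti) = 0), satisfies r_anti = r_m(1 + κ₂/(σ r_m⁴)) + O(κ₂²); in particular r_in < r_m < r_anti for small κ₂ > 0. -/

import Mathlib

/-!
With `κ₁ = 0` the determinant factors as `2κ₂ (2κ₂ − σ r² (r² − r_m²))`, so it vanishes
exactly on the quartic `σ r² (r² − r_m²) = 2κ₂`, whose positive root lies beyond `r_m`. Writing
`d = κ₂ / (σ r_m³)`, the quartic reads `r² (r² − r_m²) = 2 d r_m³`, and substituting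
`r = r_m + d + e` gives `e · P = −d² (5 r_m² + 4 r_m d + d²)` with `P ≥ 2 r_m³`,
so `|e| ≤ 5 d² / r_m`.
-/

/-- Determinant of the antiphase transverse Jacobian block. -/
def detJanti (u σ rm κ₁ κ₂ r : ℝ) : ℝ :=
  2 * (u + 6 * r ^ 2 - 5 * r ^ 4) * κ₁ + 2 * σ * r ^ 2 * (rm ^ 2 - r ^ 2) * κ₂
    + 2 * κ₁ ^ 2 + 4 * κ₂ ^ 2

lemma detJanti_zero_eq_zero_iff {u σ rm κ₂ r : ℝ} (hκ : κ₂ ≠ 0) :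
    detJanti u σ rm 0 κ₂ r = 0 ↔ σ * r ^ 2 * (r ^ 2 - rm ^ 2) = 2 * κ₂ := by
  have hfactor :
      detJanti u σ rm 0 κ₂ r = 2 * κ₂ * (2 * κ₂ - σ * r ^ 2 * (r ^ 2 - rm ^ 2)) := by
    unfold detJanti; ring
  rw [hfactor, mul_eq_zero, or_iff_right (mul_ne_zero two_ne_zero hκ), sub_eq_zero, eq_comm]

lemma sq_lt_sq_of_mul_sq_mul_sub_sq_pos {σ a b r : ℝ} (hσ : 0 ≤ σ)
    (h : 0 < σ * r ^ 2 * (b ^ 2 - a ^ 2)) : a ^ 2 < b ^ 2 :=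
  sub_pos.mp (pos_of_mul_pos_right h (by positivity))

lemma lt_of_mul_sq_mul_sub_sq_eq {σ rm κ r : ℝ} (hσ : 0 ≤ σ) (hrm : 0 ≤ rm) (hκ : 0 < κ)
    (h : σ * r ^ 2 * (rm ^ 2 - r ^ 2) = 2 * κ) : r < rm :=
  lt_of_abs_lt <|
    abs_lt_of_sq_lt_sq (sq_lt_sq_of_mul_sq_mul_sub_sq_pos hσ (by rw [h]; positivity)) hrm

lemma lt_of_mul_sq_mul_sq_sub_eq {σ rm κ r : ℝ} (hσ : 0 ≤ σ) (hr : 0 ≤ r) (hκ : 0 < κ)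
    (h : σ * r ^ 2 * (r ^ 2 - rm ^ 2) = 2 * κ) : rm < r :=
  lt_of_abs_lt <|
    abs_lt_of_sq_lt_sq (sq_lt_sq_of_mul_sq_mul_sub_sq_pos hσ (by rw [h]; positivity)) hr

lemma abs_sub_add_le_of_sq_mul_sq_sub_eq {a d r : ℝ} (ha : 0 < a) (hd : 0 ≤ d) (hda : d ≤ a)
    (har : a ≤ r) (h : r ^ 2 * (r ^ 2 - a ^ 2) = 2 * d * a ^ 3) :
    |r - (a + d)| ≤ 5 * d ^ 2 / a := by
  set P := (r + (a + d)) * (r ^ 2 + (a + d) ^ 2 - a ^ 2)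
  have hexpand : (r - (a + d)) * P = -(d ^ 2 * (5 * a ^ 2 + 4 * a * d + d ^ 2)) := by
    linear_combination h
  have hP : 2 * a ^ 3 ≤ P := by
    have h₁ : 2 * a ≤ r + (a + d) := by linarith
    have h₂ : a ^ 2 ≤ r ^ 2 + (a + d) ^ 2 - a ^ 2 := by nlinarith
    calc 2 * a ^ 3 = 2 * a * a ^ 2 := by ring
      _ ≤ P := mul_le_mul h₁ h₂ (by positivity) (by linarith)
  have hQ : d ^ 2 * (5 * a ^ 2 + 4 * a * d + d ^ 2) ≤ 10 * a ^ 2 * d ^ 2 := by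
    have : 4 * a * d + d ^ 2 ≤ 5 * a ^ 2 := by nlinarith
    nlinarith [sq_nonneg d]
  rw [le_div_iff₀ ha]
  have : |r - (a + d)| * (2 * a ^ 3) ≤ 10 * a ^ 2 * d ^ 2 :=
    calc |r - (a + d)| * (2 * a ^ 3) ≤ |r - (a + d)| * P := by gcongr
      _ = d ^ 2 * (5 * a ^ 2 + 4 * a * d + d ^ 2) := by
        rw [← abs_of_pos (by linarith [pow_pos ha 3] : 0 < P), ← abs_mul, hexpand, abs_neg,
          abs_of_nonneg (mul_nonneg (sq_nonneg d) (by nlinarith [mul_nonneg ha.le hd]))]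
      _ ≤ 10 * a ^ 2 * d ^ 2 := hQ
  nlinarith [pow_pos ha 2]

lemma abs_sub_first_order_le_of_quartic {σ rm κ r : ℝ} (hσ : 0 < σ) (hrm : 0 < rm)
    (hκ : 0 < κ) (hκε : κ ≤ σ * rm ^ 4) (hr : rm ≤ r) (h : σ * r ^ 2 * (r ^ 2 - rm ^ 2) = 2 * κ) :
    |r - rm * (1 + κ / (σ * rm ^ 4))| ≤ 5 / (σ ^ 2 * rm ^ 7) * κ ^ 2 := by
  obtain ⟨d, rfl⟩ : ∃ d, κ = d * (σ * rm ^ 3) :=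
    ⟨κ / (σ * rm ^ 3), (div_mul_cancel₀ κ (by positivity)).symm⟩
  have hd : 0 ≤ d := (pos_of_mul_pos_left hκ (by positivity)).le
  have hdrm : d ≤ rm := le_of_mul_le_mul_right (hκε.trans_eq (by ring)) (by positivity)
  have hquartic : r ^ 2 * (r ^ 2 - rm ^ 2) = 2 * d * rm ^ 3 :=
    mul_left_cancel₀ hσ.ne' (by linear_combination h)
  have hcentre : rm * (1 + d * (σ * rm ^ 3) / (σ * rm ^ 4)) = rm + d := by field_simp
  have hbound : 5 / (σ ^ 2 * rm ^ 7) * (d * (σ * rm ^ 3)) ^ 2 = 5 * d ^ 2 / rm := by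
    field_simp
  rw [hcentre, hbound]
  exact abs_sub_add_le_of_sq_mul_sq_sub_eq hrm hd hdrm hr hquartic

theorem stmt_12 (σ rm : ℝ) (hσ : 0 < σ) (hrm : 0 < rm) :
    (∀ u κ₂ r : ℝ, 0 < κ₂ → 0 < r →
      (detJanti u σ rm 0 κ₂ r = 0 ↔ σ * r ^ 2 * (r ^ 2 - rm ^ 2) = 2 * κ₂)) ∧
    (∀ κ₂ r : ℝ, 0 < κ₂ → 0 < r →
      (σ * r ^ 2 * (rm ^ 2 - r ^ 2) = 2 * κ₂ → r < rm) ∧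
      (σ * r ^ 2 * (r ^ 2 - rm ^ 2) = 2 * κ₂ → rm < r)) ∧
    (∃ C ε : ℝ, 0 < C ∧ 0 < ε ∧
      ∀ κ₂ ranti : ℝ, 0 < κ₂ → κ₂ < ε → 0 < ranti →
        σ * ranti ^ 2 * (ranti ^ 2 - rm ^ 2) = 2 * κ₂ →
        |ranti - rm * (1 + κ₂ / (σ * rm ^ 4))| ≤ C * κ₂ ^ 2) := by
  refine ⟨fun u κ₂ r hκ _ => detJanti_zero_eq_zero_iff hκ.ne', fun κ₂ r hκ hr =>
    ⟨lt_of_mul_sq_mul_sub_sq_eq hσ.le hrm.le hκ, lt_of_mul_sq_mul_sq_sub_eq hσ.le hr.le hκ⟩,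
    5 / (σ ^ 2 * rm ^ 7), σ * rm ^ 4, by positivity, by positivity, ?_⟩
  intro κ₂ r hκ hκε hr h
  have hrm_lt : rm < r := lt_of_mul_sq_mul_sq_sub_eq hσ.le hr.le hκ h
  exact abs_sub_first_order_le_of_quartic hσ hrm hκ hκε.le hrm_lt.le h
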